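/- arXiv:2307.08127 — 12 statements merged into one kernel-verified Lean document; each statement's English description precedes it below -/
import Mathlib

section
/- Let u, y : ℝ → ℤ → ℂ be functions differentiable in x, let α, β, γ ∈ ℂ, and suppose that for all n ∈ ℤ the flows ∂ₓuₙ = uₙ(uₙ₊₁ − uₙ₋₁) and ∂ₓyₙ = uₙ(yₙ₊₁ − yₙ₋₁) hold, and that yₙ + yₙ₋₁ ≠ 0 for all n. Define Fₙ = uₙ(yₙ₊₁ + yₙ)(yₙ + yₙ₋₁) − αyₙ² − (−1)ⁿβyₙ − γ and Gₙ = (Fₙ − Fₙ₋₁)/(yₙ + yₙ₋₁). Then for all n: ∂ₓFₙ = uₙ(yₙ + yₙ₋₁)Gₙ₊₁ + uₙ(yₙ₊₁ + yₙ)Gₙ. In particular, if Fₙ = 0 for all n at every point, then ∂ₓFₙ = 0. -/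
/-!
Writing `Pₙ = yₙ₊₁ + yₙ` and `Qₙ = yₙ + yₙ₋₁ = Pₙ₋₁`, the difference `Fₙ − Fₙ₋₁` factors
as `Qₙ · Hₙ` with the polynomial
`Hₙ = uₙPₙ − uₙ₋₁Qₙ₋₁ − α(yₙ − yₙ₋₁) − (−1)ⁿβ`, so `Gₙ = Hₙ` wherever `Qₙ ≠ 0`.
Along the flow, `∂ₓFₙ = uₙQₙHₙ₊₁ + uₙPₙHₙ` is then a polynomial identity.
-/

lemma neg_one_zpow_sub_one {K : Type*} [DivisionRing K] (n : ℤ) :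
    (-1 : K) ^ (n - 1) = -(-1) ^ n := by
  rw [zpow_sub_one₀ (neg_ne_zero.mpr one_ne_zero)]
  simp

namespace Volterra

section Algebraic

variable {K : Type*} [Field K] (α β γ : K) (u y : ℤ → K)

def constraint (n : ℤ) : K :=
  u n * (y (n + 1) + y n) * (y n + y (n - 1)) - α * y n ^ 2 - (-1) ^ n * β * y n - γ

def constraintQuot (n : ℤ) : K :=
  u n * (y (n + 1) + y n) - u (n - 1) * (y (n - 1) + y (n - 2))
    - α * (y n - y (n - 1)) - (-1) ^ n * β

lemma constraint_sub_constraint_sub_one (n : ℤ) :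
    constraint α β γ u y n - constraint α β γ u y (n - 1)
      = (y n + y (n - 1)) * constraintQuot α β u y n := by
  simp only [constraint, constraintQuot, sub_add_cancel, neg_one_zpow_sub_one,
    show n - 1 - 1 = n - 2 by omega]
  ring

lemma constraint_sub_div_eq_constraintQuot {n : ℤ} (hn : y n + y (n - 1) ≠ 0) :
    (constraint α β γ u y n - constraint α β γ u y (n - 1)) / (y n + y (n - 1))
      = constraintQuot α β u y n := by
  rw [constraint_sub_constraint_sub_one, mul_div_cancel_left₀ _ hn]

end Algebraic

section Flow

variable {𝕜 K : Type*} [NontriviallyNormedField 𝕜] [NormedField K] [NormedAlgebra 𝕜 K]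
  {u y : 𝕜 → ℤ → K} {x : 𝕜}

theorem hasDerivAt_constraint (α β γ : K)
    (hu : ∀ m, HasDerivAt (fun t => u t m) (u x m * (u x (m + 1) - u x (m - 1))) x)
    (hy : ∀ m, HasDerivAt (fun t => y t m) (u x m * (y x (m + 1) - y x (m - 1))) x) (n : ℤ) :
    HasDerivAt (fun t => constraint α β γ (u t) (y t) n)
      (u x n * (y x n + y x (n - 1)) * constraintQuot α β (u x) (y x) (n + 1)
        + u x n * (y x (n + 1) + y x n) * constraintQuot α β (u x) (y x) n) x := by
  have hyn := hy n
  have hyn_succ := hy (n + 1)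
  have hyn_pred := hy (n - 1)
  have h : HasDerivAt (fun t => constraint α β γ (u t) (y t) n) _ x :=
    ((((hu n).fun_mul (hyn_succ.fun_add hyn)).fun_mul (hyn.fun_add hyn_pred)).fun_sub
      ((hyn.fun_pow 2).const_mul α)).fun_sub (hyn.const_mul ((-1) ^ n * β)) |>.sub_const γ
  refine h.congr_deriv ?_
  simp only [constraintQuot, add_sub_cancel_right, sub_add_cancel,
    zpow_add_one₀ (neg_ne_zero.mpr (one_ne_zero (α := K))),
    show n + 1 + 1 = n + 2 by omega, show n + 1 - 2 = n - 1 by omega,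
    show n - 1 - 1 = n - 2 by omega]
  push_cast
  ring

end Flow

end Volterra

/-- consistency of the negative-symmetry constraint of the Volterra
lattice with the `x`-flow `∂ₓuₙ = uₙ(uₙ₊₁ − uₙ₋₁)`, `∂ₓyₙ = uₙ(yₙ₊₁ − yₙ₋₁)`. -/
theorem volterra_constraint_x_flow
    (u y : ℝ → ℤ → ℂ) (α β γ : ℂ)
    (hu : ∀ (x : ℝ) (n : ℤ), HasDerivAt (fun x => u x n)
      (u x n * (u x (n + 1) - u x (n - 1))) x)
    (hy : ∀ (x : ℝ) (n : ℤ), HasDerivAt (fun x => y x n)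
      (u x n * (y x (n + 1) - y x (n - 1))) x)
    (hden : ∀ (x : ℝ) (n : ℤ), y x n + y x (n - 1) ≠ 0)
    (F G : ℝ → ℤ → ℂ)
    (hF : ∀ (x : ℝ) (n : ℤ), F x n =
      u x n * (y x (n + 1) + y x n) * (y x n + y x (n - 1))
        - α * (y x n) ^ 2 - (-1 : ℂ) ^ n * β * y x n - γ)
    (hG : ∀ (x : ℝ) (n : ℤ), G x n = (F x n - F x (n - 1)) / (y x n + y x (n - 1))) :
    (∀ (x : ℝ) (n : ℤ), HasDerivAt (fun x => F x n)
      (u x n * (y x n + y x (n - 1)) * G x (n + 1)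
        + u x n * (y x (n + 1) + y x n) * G x n) x)
    ∧ ((∀ (x : ℝ) (n : ℤ), F x n = 0) →
        ∀ (x : ℝ) (n : ℤ), HasDerivAt (fun x => F x n) 0 x) := by
  have hF_eq : F = fun x => Volterra.constraint α β γ (u x) (y x) := funext₂ hF
  have hG_eq : G = fun x => Volterra.constraintQuot α β (u x) (y x) := by
    funext x n
    rw [hG, hF_eq,
      Volterra.constraint_sub_div_eq_constraintQuot α β γ (u x) (y x) (hden x n)]
  have hderiv : ∀ (x : ℝ) (n : ℤ), HasDerivAt (fun x => F x n)
      (u x n * (y x n + y x (n - 1)) * G x (n + 1)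
        + u x n * (y x (n + 1) + y x n) * G x n) x := by
    intro x n
    rw [hF_eq, hG_eq]
    exact Volterra.hasDerivAt_constraint α β γ (hu x) (hy x) n
  refine ⟨hderiv, fun hzero x n => ?_⟩
  simpa [hG, hzero] using hderiv x n
end

section
/- Let u, y : ℝ → ℤ → ℂ be functions differentiable in t, let α, β, γ ∈ ℂ, and suppose that for all n ∈ ℤ: ∂ₜuₙ = uₙ(uₙ₊₁(uₙ₊₂ + uₙ₊₁ + uₙ) − uₙ₋₁(uₙ + uₙ₋₁ + uₙ₋₂)), ∂ₜyₙ = uₙ(uₙ₊₁(yₙ₊₂ − yₙ) + (uₙ₊₁ + 2uₙ + uₙ₋₁)(yₙ₊₁ − yₙ₋₁) + uₙ₋₁(yₙ − yₙ₋₂)), and yₙ + yₙ₋₁ ≠ 0. Define Fₙ = uₙ(yₙ₊₁ + yₙ)(yₙ + yₙ₋₁) − αyₙ² − (−1)ⁿβyₙ − γ and Gₙ = (Fₙ − Fₙ₋₁)/(yₙ + yₙ₋₁). Then for all n: ∂ₜFₙ = uₙuₙ₊₁(yₙ + yₙ₋₁)Gₙ₊₂ + uₙ(uₙ₋₁(yₙ₋₁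 + yₙ₋₂) + 2(uₙ₊₁ + uₙ)(yₙ + yₙ₋₁))Gₙ₊₁ + uₙ(uₙ₊₁(yₙ₊₂ + yₙ₊₁) + 2(uₙ + uₙ₋₁)(yₙ₊₁ + yₙ))Gₙ + uₙuₙ₋₁(yₙ₊₁ + yₙ)Gₙ₋₁. -/
/-!
`F n` depends polynomially on finitely many lattice values, so its `t`-derivative is obtained
from the product rule and the two flows. On the other side each `G k` is a difference quotient
of `F`; after clearing the four denominators `y k + y (k - 1)` and reducing the signs
`(-1) ^ (n + j)` to `(-1) ^ n`, the claim becomes a polynomial identity.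
-/

namespace Volterra

section Algebra

variable {K : Type*} [Field K]

def higherSymmetry (u : ℤ → K) (n : ℤ) : K :=
  u n * (u (n + 1) * (u (n + 2) + u (n + 1) + u n) - u (n - 1) * (u n + u (n - 1) + u (n - 2)))

def prolongedHigherSymmetry (u y : ℤ → K) (n : ℤ) : K :=
  u n * (u (n + 1) * (y (n + 2) - y n)
    + (u (n + 1) + 2 * u n + u (n - 1)) * (y (n + 1) - y (n - 1))
    + u (n - 1) * (y n - y (n - 2)))

def constraintDefect (α β γ : K) (u y : ℤ → K) (n : ℤ) : K :=
  u n * (y (n + 1) + y n) * (y n + y (n - 1)) - α * y n ^ 2 - (-1 : K) ^ n * β * y n - γ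

def constraintQuotient (α β γ : K) (u y : ℤ → K) (n : ℤ) : K :=
  (constraintDefect α β γ u y n - constraintDefect α β γ u y (n - 1)) / (y n + y (n - 1))

def constraintDefectVariation (α β : K) (u y : ℤ → K) (u' : K) (y' : ℤ → K) (n : ℤ) : K :=
  u' * (y (n + 1) + y n) * (y n + y (n - 1))
    + u n * (y' (n + 1) + y' n) * (y n + y (n - 1))
    + u n * (y (n + 1) + y n) * (y' n + y' (n - 1))
    - 2 * α * y n * y' n - (-1 : K) ^ n * β * y' n

theorem constraintDefectVariation_higherSymmetry {α β γ : K} {u y : ℤ → K} {n : ℤ}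
    (hden : ∀ k, y k + y (k - 1) ≠ 0) :
    constraintDefectVariation α β u y (higherSymmetry u n) (prolongedHigherSymmetry u y) n =
      u n * u (n + 1) * (y n + y (n - 1)) * constraintQuotient α β γ u y (n + 2)
        + u n * (u (n - 1) * (y (n - 1) + y (n - 2))
            + 2 * (u (n + 1) + u n) * (y n + y (n - 1))) * constraintQuotient α β γ u y (n + 1)
        + u n * (u (n + 1) * (y (n + 2) + y (n + 1))
            + 2 * (u n + u (n - 1)) * (y (n + 1) + y n)) * constraintQuotient α β γ u y n
        + u n * u (n - 1) * (y (n + 1) + y n) * constraintQuotient α β γ u y (n - 1) := by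
  have hp2 := hden (n + 2)
  have hp1 := hden (n + 1)
  have h0 := hden n
  have hm1 := hden (n - 1)
  unfold constraintDefectVariation higherSymmetry prolongedHigherSymmetry constraintQuotient
    constraintDefect
  have hsign : (-1 : K) ≠ 0 := by norm_num
  -- brings every index to the form `n + c` or `n - c`, and `(-1) ^ (n ± c)` to `± (-1) ^ n`
  norm_num [add_assoc, add_sub_assoc, sub_add, sub_sub, ← sub_eq_add_neg, zpow_add₀ hsign,
    zpow_sub₀ hsign] at hp2 hp1 h0 hm1 ⊢
  field_simp
  ring

end Algebra

theorem hasDerivAt_constraintDefect {𝕜 K : Type*} [NontriviallyNormedField 𝕜] [NormedField K]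
    [NormedAlgebra 𝕜 K] {u y : 𝕜 → ℤ → K} {u' : K} {y' : ℤ → K} {t : 𝕜} (α β γ : K) (n : ℤ)
    (hu : HasDerivAt (fun t => u t n) u' t) (hy : ∀ k, HasDerivAt (fun t => y t k) (y' k) t) :
    HasDerivAt (fun t => constraintDefect α β γ (u t) (y t) n)
      (constraintDefectVariation α β (u t) (y t) u' y' n) t := by
  have h := ((((hu.mul ((hy (n + 1)).add (hy n))).mul ((hy n).add (hy (n - 1)))).sub
    (((hy n).pow 2).const_mul α)).sub ((hy n).const_mul ((-1 : K) ^ n * β))).sub_const γ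
  refine h.congr_deriv ?_
  simp only [constraintDefectVariation, Pi.add_apply, Pi.mul_apply]
  push_cast
  ring

end Volterra

/-- consistency of the negative-symmetry constraint of the Volterra
lattice with the `t`-flow (the first higher symmetry) and its prolongation. -/
theorem volterra_constraint_t_flow
    (u y : ℝ → ℤ → ℂ) (α β γ : ℂ)
    (hu : ∀ (t : ℝ) (n : ℤ), HasDerivAt (fun t => u t n)
      (u t n * (u t (n + 1) * (u t (n + 2) + u t (n + 1) + u t n)
        - u t (n - 1) * (u t n + u t (n - 1) + u t (n - 2)))) t)
    (hy : ∀ (t : ℝ) (n : ℤ), HasDerivAt (fun t => y t n)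
      (u t n * (u t (n + 1) * (y t (n + 2) - y t n)
        + (u t (n + 1) + 2 * u t n + u t (n - 1)) * (y t (n + 1) - y t (n - 1))
        + u t (n - 1) * (y t n - y t (n - 2)))) t)
    (hden : ∀ (t : ℝ) (n : ℤ), y t n + y t (n - 1) ≠ 0)
    (F G : ℝ → ℤ → ℂ)
    (hF : ∀ (t : ℝ) (n : ℤ), F t n =
      u t n * (y t (n + 1) + y t n) * (y t n + y t (n - 1))
        - α * (y t n) ^ 2 - (-1 : ℂ) ^ n * β * y t n - γ)
    (hG : ∀ (t : ℝ) (n : ℤ), G t n = (F t n - F t (n - 1)) / (y t n + y t (n - 1))) :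
    ∀ (t : ℝ) (n : ℤ), HasDerivAt (fun t => F t n)
      (u t n * u t (n + 1) * (y t n + y t (n - 1)) * G t (n + 2)
        + u t n * (u t (n - 1) * (y t (n - 1) + y t (n - 2))
            + 2 * (u t (n + 1) + u t n) * (y t n + y t (n - 1))) * G t (n + 1)
        + u t n * (u t (n + 1) * (y t (n + 2) + y t (n + 1))
            + 2 * (u t n + u t (n - 1)) * (y t (n + 1) + y t n)) * G t n
        + u t n * u t (n - 1) * (y t (n + 1) + y t n) * G t (n - 1)) t := by
  intro t n
  obtain rfl : F = fun t => Volterra.constraintDefect α β γ (u t) (y t) :=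
    funext fun t => funext (hF t)
  obtain rfl : G = fun t => Volterra.constraintQuotient α β γ (u t) (y t) :=
    funext fun t => funext (hG t)
  exact (Volterra.hasDerivAt_constraintDefect α β γ n (hu t n) (hy t)).congr_deriv
    (Volterra.constraintDefectVariation_higherSymmetry (hden t))
end

section
/- Let λ ∈ ℂ and let u : ℝ² → ℤ → ℂ be a smooth function of (x, t) satisfying, for all n: ∂ₓuₙ = uₙ(uₙ₊₁ − uₙ₋₁) and ∂ₜuₙ = uₙ(uₙ₊₁(uₙ₊₂ + uₙ₊₁ + uₙ) − uₙ₋₁(uₙ + uₙ₋₁ + uₙ₋₂)). Define U⁽¹⁾ₙ = [[uₙ, −uₙ], [λ, uₙ₋₁ − λ]] and U⁽²⁾ₙ = [[uₙ(λ + uₙ₊₁ + uₙ + uₙ₋₁), −uₙ(λ + uₙ₊₁ + uₙ)], [λ(λ + uₙ + uₙ₋₁), −λ² − λuₙ + uₙ₋₁(uₙ + uₙ₋₁ + uₙ₋₂)]]. Then for all n, x, t: ∂ₜU⁽¹⁾ₙ − ∂ₓU⁽²⁾ₙ = U⁽²⁾ₙU⁽¹⁾ₙ − U⁽¹⁾ₙU⁽²⁾ₙ.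 -/
attribute [local instance] Matrix.normedAddCommGroup Matrix.normedSpace

/-!
Since `U⁽¹⁾ₙ` is affine in `u`, its derivative along a variation `v = ∂u` of the lattice field is
`[[vₙ, −vₙ], [0, vₙ₋₁]]`; that of `U⁽²⁾ₙ` follows from the product rule entry by entry.
Substituting the two Volterra flows for `v` turns the compatibility condition into an identity
between polynomials in `λ, uₙ₋₃, …, uₙ₊₂`, which holds in every commutative ring.
-/

section Algebra

variable {R : Type*} [CommRing R] (lam : R) (u v : ℤ → R) (n : ℤ)

def volterraFlow : R := u n * (u (n + 1) - u (n - 1))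

def volterraSymmetryFlow : R :=
  u n * (u (n + 1) * (u (n + 2) + u (n + 1) + u n)
    - u (n - 1) * (u n + u (n - 1) + u (n - 2)))

def laxU1 : Matrix (Fin 2) (Fin 2) R :=
  !![u n, -u n; lam, u (n - 1) - lam]

def laxU2 : Matrix (Fin 2) (Fin 2) R :=
  !![u n * (lam + u (n + 1) + u n + u (n - 1)), -u n * (lam + u (n + 1) + u n);
     lam * (lam + u n + u (n - 1)),
       -lam ^ 2 - lam * u n + u (n - 1) * (u n + u (n - 1) + u (n - 2))]

def laxU1Deriv : Matrix (Fin 2) (Fin 2) R :=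
  !![v n, -v n; 0, v (n - 1)]

def laxU2Deriv : Matrix (Fin 2) (Fin 2) R :=
  !![v n * (lam + u (n + 1) + u n + u (n - 1)) + u n * (v (n + 1) + v n + v (n - 1)),
     -(v n * (lam + u (n + 1) + u n) + u n * (v (n + 1) + v n));
     lam * (v n + v (n - 1)),
     -lam * v n + v (n - 1) * (u n + u (n - 1) + u (n - 2))
       + u (n - 1) * (v n + v (n - 1) + v (n - 2))]

theorem laxU1Deriv_symmetryFlow_sub_laxU2Deriv_flow :
    laxU1Deriv (volterraSymmetryFlow u) n - laxU2Deriv lam u (volterraFlow u) n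
      = laxU2 lam u n * laxU1 lam u n - laxU1 lam u n * laxU2 lam u n := by
  have h₁ : n + 1 + 1 = n + 2 := by ring
  have h₂ : n - 1 + 2 = n + 1 := by ring
  have h₃ : n - 1 - 1 = n - 2 := by ring
  have h₄ : n - 2 - 1 = n - 3 := by ring
  have h₅ : n - 1 - 2 = n - 3 := by ring
  have h₆ : n - 2 + 1 = n - 1 := by ring
  ext i j
  fin_cases i <;> fin_cases j <;>
    simp [laxU1Deriv, laxU2Deriv, laxU1, laxU2, volterraFlow, volterraSymmetryFlow,
      h₁, h₂, h₃, h₄, h₅, h₆] <;> ring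

end Algebra

section Calculus

variable {𝕜 : Type*} [NontriviallyNormedField 𝕜]

theorem hasDerivAt_matrix_fin_two {F : Type*} [NormedAddCommGroup F] [NormedSpace 𝕜 F]
    {a b c d : 𝕜 → F} {a' b' c' d' : F} {s : 𝕜}
    (ha : HasDerivAt a a' s) (hb : HasDerivAt b b' s)
    (hc : HasDerivAt c c' s) (hd : HasDerivAt d d' s) :
    HasDerivAt (fun s => !![a s, b s; c s, d s]) !![a', b'; c', d'] s := by
  refine hasDerivAt_pi.2 fun i => hasDerivAt_pi.2 fun j => ?_
  fin_cases i <;> fin_cases j <;> simpa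

variable {𝔸 : Type*} [NormedCommRing 𝔸] [NormedAlgebra 𝕜 𝔸]
  {u : 𝕜 → ℤ → 𝔸} {v : ℤ → 𝔸} {s : 𝕜}

theorem hasDerivAt_laxU1 (lam : 𝔸) (hu : ∀ n, HasDerivAt (fun s => u s n) (v n) s) (n : ℤ) :
    HasDerivAt (fun s => laxU1 lam (u s) n) (laxU1Deriv v n) s :=
  hasDerivAt_matrix_fin_two (hu n) (hu n).neg (hasDerivAt_const s lam)
    ((hu (n - 1)).sub_const lam)

theorem hasDerivAt_laxU2 (lam : 𝔸) (hu : ∀ n, HasDerivAt (fun s => u s n) (v n) s) (n : ℤ) :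
    HasDerivAt (fun s => laxU2 lam (u s) n) (laxU2Deriv lam (u s) v n) s := by
  have hn := hu n
  have hsucc := hu (n + 1)
  have hpred := hu (n - 1)
  have hpred₂ := hu (n - 2)
  have hc := hasDerivAt_const s lam
  refine hasDerivAt_matrix_fin_two ?_ ?_ ?_ ?_
  · exact (hn.mul (((hc.add hsucc).add hn).add hpred)).congr_deriv
      (by simp only [Pi.add_apply]; ring)
  · exact (hn.neg.mul ((hc.add hsucc).add hn)).congr_deriv
      (by simp only [Pi.add_apply, Pi.neg_apply]; ring)
  · exact (((hc.add hn).add hpred).const_mul lam).congr_deriv (by ring)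
  · exact (((hn.const_mul lam).const_sub (-lam ^ 2)).add
      (hpred.mul ((hn.add hpred).add hpred₂))).congr_deriv (by simp only [Pi.add_apply]; ring)

end Calculus

/-- compatibility of the two zero curvature matrices of the
Volterra lattice: `∂ₜU⁽¹⁾ₙ − ∂ₓU⁽²⁾ₙ = [U⁽²⁾ₙ, U⁽¹⁾ₙ]`. -/
theorem volterra_U1_U2_compatibility
    (lam : ℂ) (u : ℝ → ℝ → ℤ → ℂ)
    (hx : ∀ (x t : ℝ) (n : ℤ), HasDerivAt (fun x => u x t n)
      (u x t n * (u x t (n + 1) - u x t (n - 1))) x)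
    (ht : ∀ (x t : ℝ) (n : ℤ), HasDerivAt (fun t => u x t n)
      (u x t n * (u x t (n + 1) * (u x t (n + 2) + u x t (n + 1) + u x t n)
        - u x t (n - 1) * (u x t n + u x t (n - 1) + u x t (n - 2)))) t)
    (U1 U2 : ℝ → ℝ → ℤ → Matrix (Fin 2) (Fin 2) ℂ)
    (hU1 : ∀ (x t : ℝ) (n : ℤ), U1 x t n =
      !![u x t n, -u x t n; lam, u x t (n - 1) - lam])
    (hU2 : ∀ (x t : ℝ) (n : ℤ), U2 x t n =
      !![u x t n * (lam + u x t (n + 1) + u x t n + u x t (n - 1)),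
           -u x t n * (lam + u x t (n + 1) + u x t n);
         lam * (lam + u x t n + u x t (n - 1)),
           -lam ^ 2 - lam * u x t n
             + u x t (n - 1) * (u x t n + u x t (n - 1) + u x t (n - 2))]) :
    ∀ (n : ℤ) (x t : ℝ),
      deriv (fun t => U1 x t n) t - deriv (fun x => U2 x t n) x
        = U2 x t n * U1 x t n - U1 x t n * U2 x t n := by
  intro n x t
  have hU1' : (fun t => U1 x t n) = fun t => laxU1 lam (u x t) n := funext fun t => hU1 x t n
  have hU2' : (fun x => U2 x t n) = fun x => laxU2 lam (u x t) n := funext fun x => hU2 x t n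
  have hT := hasDerivAt_laxU1 (u := fun t => u x t) (v := volterraSymmetryFlow (u x t)) lam
    (ht x t) n
  have hX := hasDerivAt_laxU2 (u := fun x => u x t) (v := volterraFlow (u x t)) lam
    (hx x t) n
  rw [hU1', hU2', hU1 x t n, hU2 x t n]
  exact (congrArg₂ (· - ·) hT.deriv hX.deriv).trans
    (laxU1Deriv_symmetryFlow_sub_laxU2Deriv_flow lam (u x t) n)
end

section
/- Let α, β, γ ∈ ℂ, and let u, y : ℝ → ℤ → ℂ with u differentiable in the variable ξ, and suppose yₙ + yₙ₋₁ ≠ 0 for all n. For λ ∈ ℂ \ {0, α} define Lₙ = [[1, −uₙ/λ], [1, 0]] and Yₙ = (1/(λ−α))·[[−αyₙ − (−1)ⁿβ/2, (αyₙ² + (−1)ⁿβyₙ + γ)/(yₙ + yₙ₋₁)], [−λ(yₙ + yₙ₋₁), λ(yₙ + yₙ₋₁) − αyₙ₋₁ + (−1)ⁿβ/2]]. Then the following are equivalent: (i) for all n and all λ ∈ ℂ \ {0, α}, ∂_ξLₙ = Yₙ₊₁Lₙ − LₙYₙ; (ii) for all n, ∂_ξuₙ = uₙ(yₙ₊₁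 − yₙ₋₁) and uₙ(yₙ₊₁ + yₙ)(yₙ + yₙ₋₁) = αyₙ² + (−1)ⁿβyₙ + γ. -/
/-!
Write `Dₙ = uₙ(yₙ₊₁ + yₙ)(yₙ + yₙ₋₁) − (αyₙ² + (−1)ⁿβyₙ + γ)` for the defect of the constraint.
A direct computation gives
`Yₙ₊₁Lₙ − LₙYₙ = [[−δ'ₙ, −uₙ(yₙ₊₁ − yₙ₋₁)/λ + δₙ], [0, δₙ]]` with
`δₙ = Dₙ/((λ − α)(yₙ + yₙ₋₁))` and `δ'ₙ = Dₙ/((λ − α)(yₙ₊₁ + yₙ))`, while `∂_ξLₙ` only has the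
entry `−∂_ξuₙ/λ` in position (1,2). Comparing entries, the (2,2) entry is the constraint and the
(1,2) entry is then the flow; in particular one admissible `λ` already forces both.
-/

attribute [local instance] Matrix.normedAddCommGroup Matrix.normedSpace

noncomputable def volterraLax (u lam : ℂ) : Matrix (Fin 2) (Fin 2) ℂ := !![1, -u / lam; 1, 0]

/-- `negFlowMatrix α β γ ((-1)ⁿ) λ yₙ yₙ₋₁` is `Yₙ(λ)`. -/
noncomputable def negFlowMatrix (α β γ s lam y y' : ℂ) : Matrix (Fin 2) (Fin 2) ℂ :=
  (lam - α)⁻¹ •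
    !![-α * y - s * β / 2, (α * y ^ 2 + s * β * y + γ) / (y + y');
       -lam * (y + y'), lam * (y + y') - α * y' + s * β / 2]

theorem deriv_volterraLax {f : ℝ → ℂ} {ξ : ℝ} (hf : DifferentiableAt ℝ f ξ) (lam : ℂ) :
    deriv (fun t => volterraLax (f t) lam) ξ = !![0, -deriv f ξ / lam; 0, 0] := by
  have hsplit (v : ℂ) : volterraLax v lam = !![1, 0; 1, 0] + v • !![0, -lam⁻¹; 0, 0] := by
    ext i j; fin_cases i <;> fin_cases j <;> simp [volterraLax, div_eq_mul_inv]
  have hval : (!![0, -deriv f ξ / lam; 0, 0] : Matrix (Fin 2) (Fin 2) ℂ)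
      = deriv f ξ • !![0, -lam⁻¹; 0, 0] := by
    ext i j; fin_cases i <;> fin_cases j <;> simp [div_eq_mul_inv]
  rw [funext fun t => hsplit (f t), hval]
  exact ((hf.hasDerivAt.smul_const _).const_add _).deriv

theorem negFlowMatrix_mul_volterraLax_sub {α β γ s lam U a b c : ℂ} (hl0 : lam ≠ 0)
    (hla : lam ≠ α) (hab : a + b ≠ 0) (hbc : b + c ≠ 0) :
    let D := (U * (a + b) * (b + c) - (α * b ^ 2 + s * β * b + γ)) / (lam - α)
    negFlowMatrix α β γ (-s) lam a b * volterraLax U lam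
        - volterraLax U lam * negFlowMatrix α β γ s lam b c
      = !![-D / (a + b), -(U * (a - c)) / lam + D / (b + c); 0, D / (b + c)] := by
  have hla' : lam - α ≠ 0 := sub_ne_zero.2 hla
  ext i j
  fin_cases i <;> fin_cases j <;> simp [negFlowMatrix, volterraLax] <;> field_simp <;> ring

theorem volterraLax_zeroCurvature_iff {α β γ s lam U d a b c : ℂ} (hl0 : lam ≠ 0)
    (hla : lam ≠ α) (hab : a + b ≠ 0) (hbc : b + c ≠ 0) :
    !![0, -d / lam; 0, 0] = negFlowMatrix α β γ (-s) lam a b * volterraLax U lam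
        - volterraLax U lam * negFlowMatrix α β γ s lam b c
      ↔ d = U * (a - c) ∧ U * (a + b) * (b + c) = α * b ^ 2 + s * β * b + γ := by
  rw [negFlowMatrix_mul_volterraLax_sub hl0 hla hab hbc]
  set D := (U * (a + b) * (b + c) - (α * b ^ 2 + s * β * b + γ)) / (lam - α)
  have hD : D = 0 ↔ U * (a + b) * (b + c) = α * b ^ 2 + s * β * b + γ := by
    simp [D, sub_ne_zero.2 hla, sub_eq_zero]
  simp only [← Matrix.ext_iff, Fin.forall_fin_two, Matrix.of_apply, Matrix.cons_val',
    Matrix.cons_val_zero, Matrix.cons_val_one, Matrix.empty_val', Matrix.cons_val_fin_one]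
  constructor
  · rintro ⟨⟨-, h01⟩, -, h11⟩
    have hD0 : D = 0 := (div_eq_zero_iff.1 h11.symm).resolve_right hbc
    rw [hD0, zero_div, add_zero, div_left_inj' hl0, neg_inj] at h01
    exact ⟨h01, hD.1 hD0⟩
  · rintro ⟨hd, hcon⟩
    simp [hD.2 hcon, hd]

/-- the negative flow `∂_ξuₙ = uₙ(yₙ₊₁ − yₙ₋₁)` together with the
constraint `uₙ(yₙ₊₁ + yₙ)(yₙ + yₙ₋₁) = αyₙ² + (−1)ⁿβyₙ + γ` is equivalent to
the zero curvature equation `∂_ξLₙ = Yₙ₊₁Lₙ − LₙYₙ`. -/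
theorem volterra_negative_flow_zero_curvature
    (α β γ : ℂ) (u y : ℝ → ℤ → ℂ)
    (hdiff : ∀ n : ℤ, Differentiable ℝ (fun ξ => u ξ n))
    (hden : ∀ (ξ : ℝ) (n : ℤ), y ξ n + y ξ (n - 1) ≠ 0)
    (L Y : ℝ → ℤ → ℂ → Matrix (Fin 2) (Fin 2) ℂ)
    (hL : ∀ (ξ : ℝ) (n : ℤ) (lam : ℂ), L ξ n lam = !![1, -u ξ n / lam; 1, 0])
    (hY : ∀ (ξ : ℝ) (n : ℤ) (lam : ℂ), Y ξ n lam = (lam - α)⁻¹ •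
      !![-α * y ξ n - (-1 : ℂ) ^ n * β / 2,
           (α * (y ξ n) ^ 2 + (-1 : ℂ) ^ n * β * y ξ n + γ) / (y ξ n + y ξ (n - 1));
         -lam * (y ξ n + y ξ (n - 1)),
           lam * (y ξ n + y ξ (n - 1)) - α * y ξ (n - 1) + (-1 : ℂ) ^ n * β / 2]) :
    (∀ (ξ : ℝ) (n : ℤ) (lam : ℂ), lam ≠ 0 → lam ≠ α →
        deriv (fun ξ => L ξ n lam) ξ
          = Y ξ (n + 1) lam * L ξ n lam - L ξ n lam * Y ξ n lam)
    ↔ (∀ (ξ : ℝ) (n : ℤ),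
        deriv (fun ξ => u ξ n) ξ = u ξ n * (y ξ (n + 1) - y ξ (n - 1))
        ∧ u ξ n * (y ξ (n + 1) + y ξ n) * (y ξ n + y ξ (n - 1))
            = α * (y ξ n) ^ 2 + (-1 : ℂ) ^ n * β * y ξ n + γ) := by
  have hL' (ξ : ℝ) (n : ℤ) (lam : ℂ) : L ξ n lam = volterraLax (u ξ n) lam := hL ξ n lam
  have hY' (ξ : ℝ) (n : ℤ) (lam : ℂ) :
      Y ξ n lam = negFlowMatrix α β γ ((-1) ^ n) lam (y ξ n) (y ξ (n - 1)) := hY ξ n lam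
  have hsign (n : ℤ) : (-1 : ℂ) ^ (n + 1) = -(-1) ^ n := by
    rw [zpow_add_one₀ (by norm_num), mul_neg_one]
  have key (ξ : ℝ) (n : ℤ) (lam : ℂ) (hl0 : lam ≠ 0) (hla : lam ≠ α) :
      deriv (fun ξ => L ξ n lam) ξ = Y ξ (n + 1) lam * L ξ n lam - L ξ n lam * Y ξ n lam ↔
        deriv (fun ξ => u ξ n) ξ = u ξ n * (y ξ (n + 1) - y ξ (n - 1))
        ∧ u ξ n * (y ξ (n + 1) + y ξ n) * (y ξ n + y ξ (n - 1))
            = α * (y ξ n) ^ 2 + (-1 : ℂ) ^ n * β * y ξ n + γ := by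
    have hab := hden ξ (n + 1)
    rw [add_sub_cancel_right] at hab
    simp only [hL', hY', hsign, add_sub_cancel_right]
    rw [deriv_volterraLax (hdiff n ξ) lam]
    exact volterraLax_zeroCurvature_iff hl0 hla hab (hden ξ n)
  constructor
  · intro h ξ n
    obtain ⟨lam, hlam⟩ := Infinite.exists_notMem_finset ({0, α} : Finset ℂ)
    simp only [Finset.mem_insert, Finset.mem_singleton, not_or] at hlam
    exact (key ξ n lam hlam.1 hlam.2).1 (h ξ n lam hlam.1 hlam.2)
  · intro h ξ n lam hl0 hla
    exact (key ξ n lam hl0 hla).2 (h ξ n)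
end

section
/- Let u : ℤ → ℂ and define h⁽ⁱ⁾ₙ for i ≥ 0, n ∈ ℤ by the recursion h⁽⁰⁾ₙ = 1/2 and h⁽ⁱ⁺¹⁾ₙ = uₙ·Σ_{s=0}^{i}(h⁽ˢ⁾ₙ₊₁ + h⁽ˢ⁾ₙ)(h⁽ⁱ⁻ˢ⁾ₙ + h⁽ⁱ⁻ˢ⁾ₙ₋₁) − Σ_{s=1}^{i} h⁽ˢ⁾ₙ·h⁽ⁱ⁺¹⁻ˢ⁾ₙ. For λ ∈ ℂ, λ ≠ 0, define the 2×2 matrices H⁽ˢ⁾ₙ = [[h⁽ˢ⁺¹⁾ₙ, −uₙ(h⁽ˢ⁾ₙ₊₁ + h⁽ˢ⁾ₙ)], [λ(h⁽ˢ⁾ₙ + h⁽ˢ⁾ₙ₋₁), −λ(h⁽ˢ⁾ₙ + h⁽ˢ⁾ₙ₋₁) + h⁽ˢ⁺¹⁾ₙ₋₁]], U⁽ⁱ⁾ₙ = Σ_{s=0}^{i−1} λ^{i−1−s}·H⁽ˢ⁾ₙ, and Lₙ = [[1, −uₙ/λ], [1, 0]]. Then for every i ≥ 1 and every n: U⁽ⁱ⁾ₙ₊₁Lₙ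 − LₙU⁽ⁱ⁾ₙ = [[0, −uₙ(h⁽ⁱ⁾ₙ₊₁ − h⁽ⁱ⁾ₙ₋₁)/λ], [0, 0]]. -/
/-!
Collect the `h⁽ˢ⁾ₙ` into the generating series `Fₙ = Σₛ h⁽ˢ⁾ₙ Xˢ`. The recursion says exactly that
`Fₙ² = 1/4 + X uₙ (Fₙ₊₁ + Fₙ)(Fₙ + Fₙ₋₁)`. Subtracting this at `n` from the same identity at `n + 1`
leaves a common factor `Fₙ₊₁ + Fₙ`, whose constant term is `1`; cancelling it in the domain `K⟦X⟧`
gives the linear relation `h⁽ˢ⁺¹⁾ₙ₊₁ − h⁽ˢ⁺¹⁾ₙ = uₙ₊₁(h⁽ˢ⁾ₙ₊₂ + h⁽ˢ⁾ₙ₊₁) − uₙ(h⁽ˢ⁾ₙ + h⁽ˢ⁾ₙ₋₁)`.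
That relation makes each `H⁽ˢ⁾ₙ₊₁Lₙ − LₙH⁽ˢ⁾ₙ` strictly upper triangular, with corner entry
`uₙ/λ · (λ Dₛ − Dₛ₊₁)` where `Dₛ = h⁽ˢ⁾ₙ₊₁ − h⁽ˢ⁾ₙ₋₁`; weighted by `λ^(i−1−s)` these corners telescope
to `uₙ/λ · (λⁱ D₀ − Dᵢ) = −uₙDᵢ/λ`.
-/

open Finset

structure VolterraRecursion {K : Type*} [Field K] (u : ℤ → K) (h : ℕ → ℤ → K) : Prop where
  zero : ∀ n : ℤ, h 0 n = 1 / 2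
  succ : ∀ (i : ℕ) (n : ℤ), h (i + 1) n =
    u n * ∑ s ∈ range (i + 1), (h s (n + 1) + h s n) * (h (i - s) n + h (i - s) (n - 1))
      - ∑ s ∈ Icc 1 i, h s n * h (i + 1 - s) n

def volterraSeries {R : Type*} [Semiring R] (h : ℕ → ℤ → R) (n : ℤ) : PowerSeries R :=
  PowerSeries.mk fun s => h s n

namespace VolterraRecursion

open PowerSeries

variable {K : Type*} [Field K] [NeZero (2 : K)] {u : ℤ → K} {h : ℕ → ℤ → K}

theorem sum_antidiagonal_succ (hh : VolterraRecursion u h) (k : ℕ) (n : ℤ) :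
    ∑ p ∈ antidiagonal (k + 1), h p.1 n * h p.2 n =
      u n * ∑ p ∈ antidiagonal k, (h p.1 (n + 1) + h p.1 n) * (h p.2 n + h p.2 (n - 1)) := by
  have hsplit : ∑ p ∈ antidiagonal (k + 1), h p.1 n * h p.2 n =
      h 0 n * h (k + 1) n + ∑ s ∈ Icc 1 k, h s n * h (k + 1 - s) n + h (k + 1) n * h 0 n := by
    rw [Nat.sum_antidiagonal_eq_sum_range_succ (fun a b => h a n * h b n), sum_range_succ,
      range_eq_Ico, sum_eq_sum_Ico_succ_bot (by omega), Nat.sub_self, Nat.sub_zero]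
    rfl
  rw [hsplit, Nat.sum_antidiagonal_eq_sum_range_succ
    (fun a b => (h a (n + 1) + h a n) * (h b n + h b (n - 1))), hh.zero]
  linear_combination h (k + 1) n * add_halves (1 : K) + hh.succ k n

theorem volterraSeries_sq (hh : VolterraRecursion u h) (n : ℤ) :
    volterraSeries h n ^ 2 = C (1 / 2) ^ 2 + X * (C (u n) *
      ((volterraSeries h (n + 1) + volterraSeries h n) *
        (volterraSeries h n + volterraSeries h (n - 1)))) := by
  ext (_ | k)
  · simp [sq, coeff_mul, volterraSeries, hh.zero]
  · rw [sq, coeff_mul, map_add, coeff_succ_X_mul, coeff_C_mul, coeff_mul, ← map_pow, coeff_C,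
      if_neg k.succ_ne_zero, zero_add]
    simp [volterraSeries, hh.sum_antidiagonal_succ]

theorem volterraSeries_succ_sub (hh : VolterraRecursion u h) (n : ℤ) :
    volterraSeries h (n + 1) - volterraSeries h n = X * (C (u (n + 1)) *
      (volterraSeries h (n + 2) + volterraSeries h (n + 1)) -
        C (u n) * (volterraSeries h n + volterraSeries h (n - 1))) := by
  have hne : volterraSeries h (n + 1) + volterraSeries h n ≠ 0 := by
    refine ne_of_apply_ne (coeff 0) ?_
    simp only [map_add, volterraSeries, coeff_mk, hh.zero, add_halves, map_zero]
    exact one_ne_zero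
  refine mul_left_cancel₀ hne ?_
  have hsq := hh.volterraSeries_sq (n + 1)
  rw [add_sub_cancel_right, show n + 1 + 1 = n + 2 by ring] at hsq
  linear_combination hsq - hh.volterraSeries_sq n

theorem shift_sub_eq (hh : VolterraRecursion u h) (s : ℕ) (n : ℤ) :
    h (s + 1) (n + 1) - h (s + 1) n =
      u (n + 1) * (h s (n + 2) + h s (n + 1)) - u n * (h s n + h s (n - 1)) := by
  simpa [volterraSeries, mul_sub] using congrArg (coeff (s + 1)) (hh.volterraSeries_succ_sub n)

end VolterraRecursion

theorem sum_range_pow_mul_sub_telescope {R : Type*} [CommRing R] (x : R) (f : ℕ → R) (i : ℕ) :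
    ∑ s ∈ range i, x ^ (i - 1 - s) * (x * f s - f (s + 1)) = x ^ i * f 0 - f i := by
  induction i with
  | zero => simp
  | succ i ih =>
    have hpow : ∀ s ∈ range i, x ^ (i - s) = x * x ^ (i - 1 - s) := fun s hs => by
      rw [← pow_succ', show i - 1 - s + 1 = i - s by grind]
    rw [sum_range_succ, Nat.add_sub_cancel, Nat.sub_self, sum_congr rfl fun s hs => by
      rw [hpow s hs, mul_assoc], ← mul_sum, ih]
    ring

section Matrices

variable {K : Type*} [Field K]

def volterraH (u : ℤ → K) (h : ℕ → ℤ → K) (lam : K) (s : ℕ) (n : ℤ) : Matrix (Fin 2) (Fin 2) K :=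
  !![h (s + 1) n, -u n * (h s (n + 1) + h s n);
     lam * (h s n + h s (n - 1)), -lam * (h s n + h s (n - 1)) + h (s + 1) (n - 1)]

def volterraL (u : ℤ → K) (lam : K) (n : ℤ) : Matrix (Fin 2) (Fin 2) K :=
  !![1, -u n / lam; 1, 0]

theorem volterraH_mul_volterraL_sub {u : ℤ → K} {h : ℕ → ℤ → K} {lam : K} (hlam : lam ≠ 0)
    {s : ℕ} {n : ℤ} (hshift : h (s + 1) (n + 1) - h (s + 1) n =
      u (n + 1) * (h s (n + 2) + h s (n + 1)) - u n * (h s n + h s (n - 1))) :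
    volterraH u h lam s (n + 1) * volterraL u lam n - volterraL u lam n * volterraH u h lam s n =
      !![0, u n / lam * (lam * (h s (n + 1) - h s (n - 1)) - (h (s + 1) (n + 1) - h (s + 1) (n - 1)));
         0, 0] := by
  rw [volterraH, volterraH, volterraL, add_sub_cancel_right, show n + 1 + 1 = n + 2 by ring]
  ext i j
  fin_cases i <;> fin_cases j <;> simp <;> field_simp
  · linear_combination hshift
  · ring
  · ring

end Matrices

/-- the matrices `U⁽ⁱ⁾ₙ` built from the polynomials `h⁽ˢ⁾ₙ` of the
Volterra hierarchy satisfy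
`U⁽ⁱ⁾ₙ₊₁Lₙ − LₙU⁽ⁱ⁾ₙ = [[0, −uₙ(h⁽ⁱ⁾ₙ₊₁ − h⁽ⁱ⁾ₙ₋₁)/λ], [0, 0]]`. -/
theorem volterra_hierarchy_zero_curvature
    (u : ℤ → ℂ) (h : ℕ → ℤ → ℂ)
    (h0 : ∀ n : ℤ, h 0 n = 1 / 2)
    (hrec : ∀ (i : ℕ) (n : ℤ), h (i + 1) n =
      u n * ∑ s ∈ Finset.range (i + 1),
          (h s (n + 1) + h s n) * (h (i - s) n + h (i - s) (n - 1))
        - ∑ s ∈ Finset.Icc 1 i, h s n * h (i + 1 - s) n)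
    (lam : ℂ) (hlam : lam ≠ 0)
    (H : ℕ → ℤ → Matrix (Fin 2) (Fin 2) ℂ)
    (hH : ∀ (s : ℕ) (n : ℤ), H s n =
      !![h (s + 1) n, -u n * (h s (n + 1) + h s n);
         lam * (h s n + h s (n - 1)),
           -lam * (h s n + h s (n - 1)) + h (s + 1) (n - 1)])
    (U : ℕ → ℤ → Matrix (Fin 2) (Fin 2) ℂ)
    (hU : ∀ (i : ℕ) (n : ℤ), U i n = ∑ s ∈ Finset.range i, lam ^ (i - 1 - s) • H s n)
    (L : ℤ → Matrix (Fin 2) (Fin 2) ℂ)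
    (hL : ∀ n : ℤ, L n = !![1, -u n / lam; 1, 0]) :
    ∀ i : ℕ, 1 ≤ i → ∀ n : ℤ,
      U i (n + 1) * L n - L n * U i n
        = !![0, -u n * (h i (n + 1) - h i (n - 1)) / lam; 0, 0] := by
  intro i _ n
  obtain rfl : H = volterraH u h lam := funext fun s => funext (hH s)
  obtain rfl : L = volterraL u lam := funext hL
  have hcomm (s : ℕ) :=
    volterraH_mul_volterraL_sub hlam (VolterraRecursion.shift_sub_eq ⟨h0, hrec⟩ s n)
  simp only [hU, sum_mul, mul_sum, ← sum_sub_distrib, smul_mul_assoc, mul_smul_comm, ← smul_sub,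
    hcomm]
  have hentry : ∑ s ∈ range i, lam ^ (i - 1 - s) * (u n / lam *
      (lam * (h s (n + 1) - h s (n - 1)) - (h (s + 1) (n + 1) - h (s + 1) (n - 1)))) =
        -u n * (h i (n + 1) - h i (n - 1)) / lam := by
    simp_rw [mul_left_comm (lam ^ _) (u n / lam), ← mul_sum,
      sum_range_pow_mul_sub_telescope lam fun s => h s (n + 1) - h s (n - 1), h0]
    ring
  ext a b
  fin_cases a <;> fin_cases b <;> simp [Matrix.sum_apply, hentry]
end

section
/- Let m ≥ 0, δ, ε ∈ ℂ, and let u, y¹, …, yᵐ : ℝ² → ℤ → ℂ be functions of (x, t), differentiable in x, satisfying for all n: ∂ₓuₙ = uₙ(uₙ₊₁ − uₙ₋₁) and ∂ₓyʲₙ = uₙ(yʲₙ₊₁ − yʲₙ₋₁) for j = 1, …, m. Define Cₙ = 4t·uₙ(uₙ₊₁ + uₙ + uₙ₋₁) + 2x·uₙ + n − δ + (−1)ⁿε − (y¹ₙ + … + yᵐₙ). Then for all n: ∂ₓCₙ = uₙ(Cₙ₊₁ − Cₙ₋₁). In particular, the constraint Cₙ = 0 for all n is preserved by the x-flow. -/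
/-!
The right-hand sides `uₙ(fₙ₊₁ − fₙ₋₁)` depend linearly on `f`, so the sequences `f` whose
`x`-derivative obeys the prolonged Volterra flow form a complex vector space. The constraint
`Cₙ` is a linear combination of members of it: the `yʲ`, constants, `(−1)ⁿ`,
`Wₙ = uₙ(uₙ₊₁ + uₙ + uₙ₋₁)` (which generates the commuting `t`-flow `∂ₜuₙ = uₙ(Wₙ₊₁ − Wₙ₋₁)`),
and `2xuₙ + n`, where the explicit `x`-dependence is compensated by the index:
`∂ₓ(2x) uₙ = 2uₙ = uₙ((n + 1) − (n − 1))`.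
-/

def volterraProlongations (u : ℝ → ℤ → ℂ) : Submodule ℂ (ℝ → ℤ → ℂ) where
  carrier := {f | ∀ x n, HasDerivAt (fun x => f x n) (u x n * (f x (n + 1) - f x (n - 1))) x}
  zero_mem' := fun x n => by simpa using hasDerivAt_const x (0 : ℂ)
  add_mem' := fun hf hg x n => by
    refine ((hf x n).fun_add (hg x n)).congr_deriv ?_
    simp only [Pi.add_apply]
    ring
  smul_mem' := fun c f hf x n => by
    refine ((hf x n).const_mul c).congr_deriv ?_
    simp only [Pi.smul_apply, smul_eq_mul]
    ring

namespace volterraProlongations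

variable {u : ℝ → ℤ → ℂ}

theorem const_mem (c : ℂ) : (fun _ _ => c) ∈ volterraProlongations u := fun x _ => by
  simpa using hasDerivAt_const x c

theorem alternating_mem (c : ℂ) :
    (fun _ (n : ℤ) => (-1 : ℂ) ^ n * c) ∈ volterraProlongations u := fun x n => by
  have hsign : (-1 : ℂ) ^ (n + 1) = (-1 : ℂ) ^ (n - 1) := by
    rw [zpow_add_one₀ (by norm_num), zpow_sub_one₀ (by norm_num)]
    ring
  simpa [hsign] using hasDerivAt_const x ((-1 : ℂ) ^ n * c)

theorem two_x_mul_add_index_mem (hu : u ∈ volterraProlongations u) :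
    (fun (x : ℝ) (n : ℤ) => 2 * (x : ℂ) * u x n + n) ∈ volterraProlongations u := fun x n => by
  have hx : HasDerivAt (fun x : ℝ => (x : ℂ)) 1 x := by
    simpa using (hasDerivAt_id x).ofReal_comp
  refine (((hx.const_mul 2).fun_mul (hu x n)).add_const (n : ℂ)).congr_deriv ?_
  push_cast
  ring

theorem higherFlowGenerator_mem (hu : u ∈ volterraProlongations u) :
    (fun x n => u x n * (u x (n + 1) + u x n + u x (n - 1))) ∈ volterraProlongations u :=
  fun x n => by
  have hsucc := hu x (n + 1)
  have hpred := hu x (n - 1)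
  refine ((hu x n).fun_mul ((hsucc.fun_add (hu x n)).fun_add hpred)).congr_deriv ?_
  simp only [add_sub_cancel_right, sub_add_cancel]
  ring

end volterraProlongations

/-- the non-autonomous constraint
`Cₙ = 4tuₙ(uₙ₊₁+uₙ+uₙ₋₁) + 2xuₙ + n − δ + (−1)ⁿε − Σⱼ yʲₙ`
satisfies `∂ₓCₙ = uₙ(Cₙ₊₁ − Cₙ₋₁)` along the Volterra `x`-flow, so the
constraint `Cₙ = 0` is preserved by the `x`-flow. -/
theorem volterra_nonautonomous_constraint_x_flow
    (m : ℕ) (δ ε : ℂ) (u : ℝ → ℝ → ℤ → ℂ) (y : Fin m → ℝ → ℝ → ℤ → ℂ)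
    (hu : ∀ (x t : ℝ) (n : ℤ), HasDerivAt (fun x => u x t n)
      (u x t n * (u x t (n + 1) - u x t (n - 1))) x)
    (hy : ∀ (j : Fin m) (x t : ℝ) (n : ℤ), HasDerivAt (fun x => y j x t n)
      (u x t n * (y j x t (n + 1) - y j x t (n - 1))) x)
    (C : ℝ → ℝ → ℤ → ℂ)
    (hC : ∀ (x t : ℝ) (n : ℤ), C x t n =
      4 * t * u x t n * (u x t (n + 1) + u x t n + u x t (n - 1))
        + 2 * x * u x t n + (n : ℂ) - δ + (-1 : ℂ) ^ n * ε
        - ∑ j : Fin m, y j x t n) :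
    ∀ (x t : ℝ) (n : ℤ), HasDerivAt (fun x => C x t n)
      (u x t n * (C x t (n + 1) - C x t (n - 1))) x := by
  intro x t n
  suffices hmem : (fun x n => C x t n) ∈ volterraProlongations (fun x => u x t) from
    hmem x n
  have hut : (fun x => u x t) ∈ volterraProlongations (fun x => u x t) := fun x n => hu x t n
  have hdecomp : (fun x n => C x t n) =
      (4 * t : ℂ) • (fun x n => u x t n * (u x t (n + 1) + u x t n + u x t (n - 1)))
        + (fun (x : ℝ) (n : ℤ) => 2 * (x : ℂ) * u x t n + n) - (fun _ _ => δ)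
        + (fun _ (n : ℤ) => (-1 : ℂ) ^ n * ε) - ∑ j : Fin m, (fun x => y j x t) := by
    funext x n
    simp only [hC, Pi.add_apply, Pi.sub_apply, Pi.smul_apply, smul_eq_mul, Finset.sum_apply]
    ring
  rw [hdecomp]
  open volterraProlongations in
  exact sub_mem
    (add_mem
      (sub_mem
        (add_mem (Submodule.smul_mem _ _ (higherFlowGenerator_mem hut))
          (two_x_mul_add_index_mem hut))
        (const_mem δ))
      (alternating_mem ε))
    (Submodule.sum_mem _ fun j _ x n => hy j x t n)
end

section
/- Let m ≥ 0, δ, ε ∈ ℂ, and let u, y¹, …, yᵐ : ℝ² → ℤ → ℂ be functions of (x, t), differentiable in t, satisfying for all n: ∂ₜuₙ = uₙ(uₙ₊₁(uₙ₊₂ + uₙ₊₁ + uₙ) − uₙ₋₁(uₙ + uₙ₋₁ + uₙ₋₂)) and ∂ₜyʲₙ = uₙ(uₙ₊₁(yʲₙ₊₂ − yʲₙ) + (uₙ₊₁ + 2uₙ + uₙ₋₁)(yʲₙ₊₁ − yʲₙ₋₁) + uₙ₋₁(yʲₙ − yʲₙ₋₂)) for j = 1, …, m. Define Cₙ = 4t·uₙ(uₙ₊₁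 + uₙ + uₙ₋₁) + 2x·uₙ + n − δ + (−1)ⁿε − (y¹ₙ + … + yᵐₙ). Then for all n: ∂ₜCₙ = uₙ(uₙ₊₁(Cₙ₊₂ − Cₙ) + (uₙ₊₁ + 2uₙ + uₙ₋₁)(Cₙ₊₁ − Cₙ₋₁) + uₙ₋₁(Cₙ − Cₙ₋₂)). In particular, the constraint Cₙ = 0 for all n is preserved by the t-flow. -/
/-!
Each `yʲ` solves the linear equation `∂ₜf = L f` of the prolonged flow, and so does `u`, because
`L u` is the higher symmetry itself. By linearity it remains to treat `4t gₙ + n` with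
`gₙ = uₙ(uₙ₊₁ + uₙ + uₙ₋₁)` and the 2-periodic part `(−1)ⁿε − δ`, which `L` annihilates.
Along the flow `∂ₜg = L g` (a polynomial identity), and `L n = 4g` cancels exactly the
term `4g` produced by differentiating the explicit factor `t`.
-/

namespace Volterra

/-- The operator `L` through which the first higher symmetry acts on the variables `yʲ`. -/
def prolongation (u : ℤ → ℂ) : (ℤ → ℂ) →ₗ[ℂ] (ℤ → ℂ) where
  toFun f n := u n * (u (n + 1) * (f (n + 2) - f n)
    + (u (n + 1) + 2 * u n + u (n - 1)) * (f (n + 1) - f (n - 1))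
    + u (n - 1) * (f n - f (n - 2)))
  map_add' f g := by ext n; simp only [Pi.add_apply]; ring
  map_smul' c f := by ext n; simp only [Pi.smul_apply, smul_eq_mul, RingHom.id_apply]; ring

theorem prolongation_apply (u f : ℤ → ℂ) (n : ℤ) :
    prolongation u f n = u n * (u (n + 1) * (f (n + 2) - f n)
      + (u (n + 1) + 2 * u n + u (n - 1)) * (f (n + 1) - f (n - 1))
      + u (n - 1) * (f n - f (n - 2))) :=
  rfl

/-- The first higher symmetry is `uₙ(gₙ₊₁ − gₙ₋₁)` for this `g`. -/
def symmetryPotential (u : ℤ → ℂ) (n : ℤ) : ℂ :=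
  u n * (u (n + 1) + u n + u (n - 1))

theorem prolongation_self_apply (u : ℤ → ℂ) (n : ℤ) :
    prolongation u u n = u n * (u (n + 1) * (u (n + 2) + u (n + 1) + u n)
      - u (n - 1) * (u n + u (n - 1) + u (n - 2))) := by
  rw [prolongation_apply]; ring

theorem prolongation_intCast (u : ℤ → ℂ) (n : ℤ) :
    prolongation u (fun k => (k : ℂ)) n = 4 * symmetryPotential u n := by
  rw [prolongation_apply, symmetryPotential]; push_cast; ring

theorem prolongation_eq_zero_of_periodic (u : ℤ → ℂ) {f : ℤ → ℂ} (hf : Function.Periodic f 2) :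
    prolongation u f = 0 := by
  ext n
  have hodd : f (n + 1) = f (n - 1) := by
    rw [← hf (n - 1)]; ring_nf
  rw [prolongation_apply, hf n, hodd, ← hf (n - 2), sub_add_cancel]
  simp

def prolongedSolutions (U : ℝ → ℤ → ℂ) : Submodule ℂ (ℝ → ℤ → ℂ) where
  carrier := {f | ∀ t n, HasDerivAt (fun t => f t n) (prolongation (U t) (f t) n) t}
  zero_mem' t n := by simpa using hasDerivAt_const t (0 : ℂ)
  add_mem' hf hg t n := by simpa using (hf t n).fun_add (hg t n)
  smul_mem' c f hf t n := by simpa using (hf t n).const_mul c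

variable {U : ℝ → ℤ → ℂ}

theorem mem_prolongedSolutions_of_periodic {p : ℤ → ℂ} (hp : Function.Periodic p 2) :
    (fun _ => p) ∈ prolongedSolutions U := by
  intro t n
  simpa [prolongation_eq_zero_of_periodic _ hp] using hasDerivAt_const t (p n)

theorem hasDerivAt_symmetryPotential (hU : U ∈ prolongedSolutions U) (t : ℝ) (n : ℤ) :
    HasDerivAt (fun t => symmetryPotential (U t) n)
      (prolongation (U t) (symmetryPotential (U t)) n) t := by
  have h := (hU t n).fun_mul (((hU t (n + 1)).fun_add (hU t n)).fun_add (hU t (n - 1)))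
  refine h.congr_deriv ?_
  simp only [prolongation_self_apply, prolongation_apply, symmetryPotential]
  ring_nf

theorem intCast_add_symmetryPotential_mem (hU : U ∈ prolongedSolutions U) :
    (fun t (n : ℤ) => (n : ℂ) + 4 * t * symmetryPotential (U t) n) ∈ prolongedSolutions U := by
  intro t n
  have hcoeff : HasDerivAt (fun t : ℝ => 4 * (t : ℂ)) 4 t := by
    simpa using (hasDerivAt_id t).ofReal_comp.const_mul (4 : ℂ)
  refine ((hasDerivAt_const t (n : ℂ)).fun_add
    (hcoeff.fun_mul (hasDerivAt_symmetryPotential hU t n))).congr_deriv ?_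
  change _ = prolongation (U t)
    ((fun k : ℤ => (k : ℂ)) + (4 * t : ℂ) • symmetryPotential (U t)) n
  rw [map_add, map_smul, Pi.add_apply, Pi.smul_apply, prolongation_intCast, smul_eq_mul]
  ring

end Volterra

open Volterra in
/-- the non-autonomous constraint
`Cₙ = 4tuₙ(uₙ₊₁+uₙ+uₙ₋₁) + 2xuₙ + n − δ + (−1)ⁿε − Σⱼ yʲₙ`
satisfies the linearized equation of the first higher symmetry along the
`t`-flow, so the constraint `Cₙ = 0` is preserved by the `t`-flow. -/
theorem volterra_nonautonomous_constraint_t_flow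
    (m : ℕ) (δ ε : ℂ) (u : ℝ → ℝ → ℤ → ℂ) (y : Fin m → ℝ → ℝ → ℤ → ℂ)
    (hu : ∀ (x t : ℝ) (n : ℤ), HasDerivAt (fun t => u x t n)
      (u x t n * (u x t (n + 1) * (u x t (n + 2) + u x t (n + 1) + u x t n)
        - u x t (n - 1) * (u x t n + u x t (n - 1) + u x t (n - 2)))) t)
    (hy : ∀ (j : Fin m) (x t : ℝ) (n : ℤ), HasDerivAt (fun t => y j x t n)
      (u x t n * (u x t (n + 1) * (y j x t (n + 2) - y j x t n)
        + (u x t (n + 1) + 2 * u x t n + u x t (n - 1))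
            * (y j x t (n + 1) - y j x t (n - 1))
        + u x t (n - 1) * (y j x t n - y j x t (n - 2)))) t)
    (C : ℝ → ℝ → ℤ → ℂ)
    (hC : ∀ (x t : ℝ) (n : ℤ), C x t n =
      4 * t * u x t n * (u x t (n + 1) + u x t n + u x t (n - 1))
        + 2 * x * u x t n + (n : ℂ) - δ + (-1 : ℂ) ^ n * ε
        - ∑ j : Fin m, y j x t n) :
    ∀ (x t : ℝ) (n : ℤ), HasDerivAt (fun t => C x t n)
      (u x t n * (u x t (n + 1) * (C x t (n + 2) - C x t n)
        + (u x t (n + 1) + 2 * u x t n + u x t (n - 1))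
            * (C x t (n + 1) - C x t (n - 1))
        + u x t (n - 1) * (C x t n - C x t (n - 2)))) t := by
  intro x
  have hU : u x ∈ prolongedSolutions (u x) := fun t n =>
    (hu x t n).congr_deriv (prolongation_self_apply (u x t) n).symm
  have hperiodic : Function.Periodic (fun n : ℤ => (-1 : ℂ) ^ n * ε - δ) 2 := fun n => by
    simp only [zpow_add₀ (neg_ne_zero.mpr one_ne_zero : (-1 : ℂ) ≠ 0)]; norm_num
  have hCx : C x = (fun t (n : ℤ) => (n : ℂ) + 4 * t * symmetryPotential (u x t) n)
      + (2 * x : ℂ) • u x + (fun _ (n : ℤ) => (-1 : ℂ) ^ n * ε - δ) - ∑ j, y j x := by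
    funext t n
    simp only [hC, symmetryPotential, Pi.add_apply, Pi.sub_apply, Pi.smul_apply, smul_eq_mul,
      Finset.sum_apply]
    ring
  show C x ∈ prolongedSolutions (u x)
  rw [hCx]
  exact sub_mem (add_mem (add_mem (intCast_add_symmetryPotential_mem hU)
    (Submodule.smul_mem _ _ hU)) (mem_prolongedSolutions_of_periodic hperiodic))
    (sum_mem fun j _ => hy j x)
end

section
/- Let u : ℝ → ℤ → ℂ be differentiable in x and satisfy ∂ₓuₙ = uₙ(uₙ₊₁ − uₙ₋₁) for all n. Define Kₙ = uₙ(uₙ₊₁(uₙ₊₂ + uₙ₊₁ + uₙ) − uₙ₋₁(uₙ + uₙ₋₁ + uₙ₋₂)). Then for all n: ∂ₓKₙ = Kₙ(uₙ₊₁ − uₙ₋₁) + uₙ(Kₙ₊₁ − Kₙ₋₁); that is, vₙ = Kₙ solves the linearization ∂ₓvₙ = vₙ(uₙ₊₁ − uₙ₋₁) + uₙ(vₙ₊₁ − vₙ₋₁) of the Volterra lattice, so the flow ∂ₜuₙ = Kₙ is a symmetry of the Volterra lattice. -/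
/-! The derivative of `Kₙ` along a solution is, by the chain rule, the Fréchet derivative `K_*`
applied to the Volterra vector field `F`, while the claim is that it equals the linearization
`F_*` applied to `K`. So the theorem reduces to the polynomial identity `K_*[F] = F_*[K]`, i.e.
the vanishing of the Lie bracket `[F, K]`, which is checked by expanding both sides. -/

namespace Volterra

section Algebra

variable {𝔸 : Type*} [CommRing 𝔸]

def rhs (u : ℤ → 𝔸) (n : ℤ) : 𝔸 :=
  u n * (u (n + 1) - u (n - 1))

def rhsLinearization (u v : ℤ → 𝔸) (n : ℤ) : 𝔸 :=
  v n * (u (n + 1) - u (n - 1)) + u n * (v (n + 1) - v (n - 1))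

def symmetry (u : ℤ → 𝔸) (n : ℤ) : 𝔸 :=
  u n * (u (n + 1) * (u (n + 2) + u (n + 1) + u n)
    - u (n - 1) * (u n + u (n - 1) + u (n - 2)))

def symmetryLinearization (u v : ℤ → 𝔸) (n : ℤ) : 𝔸 :=
  v n * (u (n + 1) * (u (n + 2) + u (n + 1) + u n)
      - u (n - 1) * (u n + u (n - 1) + u (n - 2)))
    + u n * (v (n + 1) * (u (n + 2) + u (n + 1) + u n)
      + u (n + 1) * (v (n + 2) + v (n + 1) + v n)
      - (v (n - 1) * (u n + u (n - 1) + u (n - 2))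
        + u (n - 1) * (v n + v (n - 1) + v (n - 2))))

theorem symmetryLinearization_rhs (u : ℤ → 𝔸) (n : ℤ) :
    symmetryLinearization u (rhs u) n = rhsLinearization u (symmetry u) n := by
  simp only [symmetryLinearization, rhsLinearization, rhs, symmetry]
  ring_nf

end Algebra

section Calculus

variable {𝕜 𝔸 : Type*} [NontriviallyNormedField 𝕜] [NormedCommRing 𝔸] [NormedAlgebra 𝕜 𝔸]

theorem hasDerivAt_symmetry {u : 𝕜 → ℤ → 𝔸} {v : ℤ → 𝔸} {x : 𝕜}
    (hu : ∀ m, HasDerivAt (fun y => u y m) (v m) x) (n : ℤ) :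
    HasDerivAt (fun y => symmetry (u y) n) (symmetryLinearization (u x) v n) x :=
  (hu n).fun_mul
    (((hu (n + 1)).fun_mul (((hu (n + 2)).fun_add (hu (n + 1))).fun_add (hu n))).fun_sub
      ((hu (n - 1)).fun_mul (((hu n).fun_add (hu (n - 1))).fun_add (hu (n - 2)))))

end Calculus

end Volterra

/-- the right-hand side `Kₙ` of the first higher symmetry solves
the linearization of the Volterra lattice along any solution, i.e. the flow
`∂ₜuₙ = Kₙ` is a symmetry of the Volterra lattice. -/
theorem volterra_first_higher_symmetry
    (u : ℝ → ℤ → ℂ)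
    (hu : ∀ (x : ℝ) (n : ℤ), HasDerivAt (fun x => u x n)
      (u x n * (u x (n + 1) - u x (n - 1))) x)
    (K : ℝ → ℤ → ℂ)
    (hK : ∀ (x : ℝ) (n : ℤ), K x n =
      u x n * (u x (n + 1) * (u x (n + 2) + u x (n + 1) + u x n)
        - u x (n - 1) * (u x n + u x (n - 1) + u x (n - 2)))) :
    ∀ (x : ℝ) (n : ℤ), HasDerivAt (fun x => K x n)
      (K x n * (u x (n + 1) - u x (n - 1))
        + u x n * (K x (n + 1) - K x (n - 1))) x := by
  obtain rfl : K = fun x => Volterra.symmetry (u x) := funext₂ hK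
  intro x n
  have h := Volterra.hasDerivAt_symmetry (v := Volterra.rhs (u x)) (hu x) n
  rw [Volterra.symmetryLinearization_rhs] at h
  exact h
end

section
/- Let u : ℝ → ℤ → ℂ be differentiable in x and satisfy ∂ₓuₙ = uₙ(uₙ₊₁ − uₙ₋₁) for all n. Then for all n: ∂ₓ(uₙ(uₙ₊₁ + uₙ + uₙ₋₁)) = uₙ(uₙ₊₁(uₙ₊₂ + uₙ₊₁ + uₙ) − uₙ₋₁(uₙ + uₙ₋₁ + uₙ₋₂)); that is, the x-derivative of the conserved density h⁽²⁾ₙ = uₙ(uₙ₊₁ + uₙ + uₙ₋₁) along the Volterra flow equals the t-derivative of h⁽¹⁾ₙ = uₙ along the first higher symmetry flow. -/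
/-- the `x`-derivative of `h⁽²⁾ₙ = uₙ(uₙ₊₁ + uₙ + uₙ₋₁)` along
the Volterra flow equals the right-hand side of the first higher symmetry. -/
theorem volterra_h2_x_derivative
    (u : ℝ → ℤ → ℂ)
    (hu : ∀ (x : ℝ) (n : ℤ), HasDerivAt (fun x => u x n)
      (u x n * (u x (n + 1) - u x (n - 1))) x) :
    ∀ (x : ℝ) (n : ℤ), HasDerivAt
      (fun x => u x n * (u x (n + 1) + u x n + u x (n - 1)))
      (u x n * (u x (n + 1) * (u x (n + 2) + u x (n + 1) + u x n)
        - u x (n - 1) * (u x n + u x (n - 1) + u x (n - 2)))) x := by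
  intro x n
  have hnext : HasDerivAt (fun x => u x (n + 1)) (u x (n + 1) * (u x (n + 2) - u x n)) x := by
    convert hu x (n + 1) using 4 <;> ring
  have hprev : HasDerivAt (fun x => u x (n - 1)) (u x (n - 1) * (u x n - u x (n - 2))) x := by
    convert hu x (n - 1) using 4 <;> ring
  refine ((hu x n).mul ((hnext.add (hu x n)).add hprev)).congr_deriv ?_
  simp only [Pi.add_apply]
  ring
end

section
/- Let a, c ∈ ℂ and let y : ℤ → ℂ satisfy yₙ + yₙ₋₁ ≠ 0 for all n. Define fₙ = (a·yₙ − a·yₙ₋₁ + c)/(yₙ + yₙ₋₁). Then for all n: (fₙ₊₁ − a)(fₙ + a)·(yₙ₊₁ + yₙ)(yₙ + yₙ₋₁) = c² − 4a²yₙ². Consequently, if u : ℤ → ℂ satisfies uₙ(yₙ₊₁ + yₙ)(yₙ + yₙ₋₁) = −4a²yₙ² + c², then uₙ = (fₙ₊₁ − a)(fₙ + a). -/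
/-- the discrete Miura factorization: with
`fₙ = (ayₙ − ayₙ₋₁ + c)/(yₙ + yₙ₋₁)` one has
`(fₙ₊₁ − a)(fₙ + a)(yₙ₊₁ + yₙ)(yₙ + yₙ₋₁) = c² − 4a²yₙ²`; consequently if
`uₙ(yₙ₊₁ + yₙ)(yₙ + yₙ₋₁) = −4a²yₙ² + c²` then `uₙ = (fₙ₊₁ − a)(fₙ + a)`. -/
theorem volterra_discrete_miura
    (a c : ℂ) (y : ℤ → ℂ)
    (hden : ∀ n : ℤ, y n + y (n - 1) ≠ 0)
    (f : ℤ → ℂ)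
    (hf : ∀ n : ℤ, f n = (a * y n - a * y (n - 1) + c) / (y n + y (n - 1))) :
    (∀ n : ℤ, (f (n + 1) - a) * (f n + a) * ((y (n + 1) + y n) * (y n + y (n - 1)))
        = c ^ 2 - 4 * a ^ 2 * (y n) ^ 2)
    ∧ ∀ u : ℤ → ℂ,
        (∀ n : ℤ, u n * (y (n + 1) + y n) * (y n + y (n - 1))
          = -4 * a ^ 2 * (y n) ^ 2 + c ^ 2) →
        ∀ n : ℤ, u n = (f (n + 1) - a) * (f n + a) := by
  have key : ∀ n : ℤ, (f (n + 1) - a) * (f n + a) * ((y (n + 1) + y n) * (y n + y (n - 1)))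
      = c ^ 2 - 4 * a ^ 2 * (y n) ^ 2 := by
    intro n
    have h1 := hden (n + 1)
    have h2 := hden n
    rw [hf, hf]
    simp only [add_sub_cancel_right] at h1 ⊢
    field_simp
    ring
  refine ⟨key, fun u hu n => ?_⟩
  have h1 := hden (n + 1)
  have h2 := hden n
  simp only [add_sub_cancel_right] at h1
  have := hu n
  have hk := key n
  have : u n * ((y (n + 1) + y n) * (y n + y (n - 1)))
      = (f (n + 1) - a) * (f n + a) * ((y (n + 1) + y n) * (y n + y (n - 1))) := by
    rw [hk]; linear_combination hu n
  exact mul_right_cancel₀ (mul_ne_zero h1 h2) this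
end

section
/- Let a, c ∈ ℂ and let u, y : ℝ → ℤ → ℂ be differentiable in x, with yₙ + yₙ₋₁ ≠ 0 and yₙ₊₁ + yₙ ≠ 0 for all n, satisfying for all n: uₙ(yₙ₊₁ + yₙ)(yₙ + yₙ₋₁) = −4a²yₙ² + c² and ∂ₓyₙ = uₙ(yₙ₊₁ − yₙ₋₁). Define fₙ = (a·yₙ − a·yₙ₋₁ + c)/(yₙ + yₙ₋₁). Then fₙ satisfies the modified Volterra lattice: ∂ₓfₙ = (fₙ² − a²)(fₙ₊₁ − fₙ₋₁) for all n. -/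
/-!
Put `sₙ = yₙ + yₙ₋₁`. The variable `fₙ` satisfies `(fₙ + a) sₙ = c + 2a yₙ` and
`(fₙ₊₁ − a) sₙ₊₁ = c − 2a yₙ`, so the constraint says exactly that `uₙ = (fₙ₊₁ − a)(fₙ + a)`.
The quotient rule gives `sₙ ∂ₓfₙ = −(fₙ − a) ∂ₓyₙ − (fₙ + a) ∂ₓyₙ₋₁`; inserting the Volterra flow
with the factorised `uₙ` and `uₙ₋₁` produces the common factor `fₙ² − a²`, and what remains
collapses to `−sₙ (fₙ₊₁ − fₙ₋₁)` by the same two relations.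
-/

section Miura

variable {K : Type*} [Field K] (a c : K) (y : ℤ → K)

def miuraMap (n : ℤ) : K := (a * y n - a * y (n - 1) + c) / (y n + y (n - 1))

variable {a c y}

theorem miuraMap_add_mul {n : ℤ} (hs : y n + y (n - 1) ≠ 0) :
    (miuraMap a c y n + a) * (y n + y (n - 1)) = c + 2 * a * y n := by
  rw [miuraMap]
  field_simp
  ring

theorem miuraMap_succ_sub_mul {n : ℤ} (hs : y (n + 1) + y n ≠ 0) :
    (miuraMap a c y (n + 1) - a) * (y (n + 1) + y n) = c - 2 * a * y n := by
  rw [miuraMap, add_sub_cancel_right]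
  field_simp
  ring

theorem eq_miuraMap_mul_miuraMap (hs : ∀ n, y n + y (n - 1) ≠ 0) {u : K} {n : ℤ}
    (hu : u * (y (n + 1) + y n) * (y n + y (n - 1)) = -4 * a ^ 2 * y n ^ 2 + c ^ 2) :
    u = (miuraMap a c y (n + 1) - a) * (miuraMap a c y n + a) := by
  have hs' : y (n + 1) + y n ≠ 0 := by simpa using hs (n + 1)
  rw [← mul_left_inj' (mul_ne_zero hs' (hs n))]
  have hcur := miuraMap_add_mul (a := a) (c := c) (hs n)
  have hnext := miuraMap_succ_sub_mul (a := a) (c := c) hs'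
  linear_combination hu - (miuraMap a c y (n + 1) - a) * (y (n + 1) + y n) * hcur
    - (c + 2 * a * y n) * hnext

theorem miuraMap_flow_combination (hs : ∀ n, y n + y (n - 1) ≠ 0) (n : ℤ) :
    (miuraMap a c y (n + 1) - a) * (y (n + 1) - y (n - 1))
      + (miuraMap a c y (n - 1) + a) * (y n - y (n - 1 - 1))
      = -(y n + y (n - 1)) * (miuraMap a c y (n + 1) - miuraMap a c y (n - 1)) := by
  have hnext := miuraMap_succ_sub_mul (a := a) (c := c) (by simpa using hs (n + 1))
  have hprev := miuraMap_add_mul (a := a) (c := c) (hs (n - 1))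
  linear_combination hnext - hprev

end Miura

theorem hasDerivAt_miuraMap {𝕜 K : Type*} [NontriviallyNormedField 𝕜] [NontriviallyNormedField K]
    [NormedAlgebra 𝕜 K] (a c : K) {y : 𝕜 → ℤ → K} {p q : K} {x : 𝕜} {n : ℤ}
    (hp : HasDerivAt (fun t => y t n) p x) (hq : HasDerivAt (fun t => y t (n - 1)) q x)
    (hs : y x n + y x (n - 1) ≠ 0) :
    HasDerivAt (fun t => miuraMap a c (y t) n)
      (-(p * (miuraMap a c (y x) n - a) + q * (miuraMap a c (y x) n + a))
        / (y x n + y x (n - 1))) x := by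
  have hnum : HasDerivAt (fun t => a * y t n - a * y t (n - 1) + c) (a * p - a * q) x :=
    ((hp.const_mul a).sub (hq.const_mul a)).add_const c
  have hden : HasDerivAt (fun t => y t n + y t (n - 1)) (p + q) x := hp.add hq
  refine (hnum.div hden hs).congr_deriv ?_
  rw [miuraMap]
  field_simp
  ring

theorem volterra_modified_lattice_general
    (a c : ℂ) (u y : ℝ → ℤ → ℂ)
    (hden : ∀ (x : ℝ) (n : ℤ), y x n + y x (n - 1) ≠ 0)
    (hconstraint : ∀ (x : ℝ) (n : ℤ),
      u x n * (y x (n + 1) + y x n) * (y x n + y x (n - 1))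
        = -4 * a ^ 2 * (y x n) ^ 2 + c ^ 2)
    (hyx : ∀ (x : ℝ) (n : ℤ), HasDerivAt (fun x => y x n)
      (u x n * (y x (n + 1) - y x (n - 1))) x)
    (f : ℝ → ℤ → ℂ)
    (hf : ∀ (x : ℝ) (n : ℤ), f x n =
      (a * y x n - a * y x (n - 1) + c) / (y x n + y x (n - 1))) :
    ∀ (x : ℝ) (n : ℤ), HasDerivAt (fun x => f x n)
      (((f x n) ^ 2 - a ^ 2) * (f x (n + 1) - f x (n - 1))) x := by
  intro x n
  have hf_eq : ∀ t, f t = miuraMap a c (y t) := fun t => funext (hf t)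
  have hu : ∀ m, u x m = (miuraMap a c (y x) (m + 1) - a) * (miuraMap a c (y x) m + a) :=
    fun m => eq_miuraMap_mul_miuraMap (hden x) (hconstraint x m)
  have hprev := hyx x (n - 1)
  rw [sub_add_cancel] at hprev
  simp only [hf_eq]
  refine (hasDerivAt_miuraMap a c (hyx x n) hprev (hden x n)).congr_deriv ?_
  rw [hu n, hu (n - 1), sub_add_cancel, div_eq_iff (hden x n)]
  linear_combination (a ^ 2 - miuraMap a c (y x) n ^ 2) * miuraMap_flow_combination (hden x) n

/-- the Miura variable `fₙ = (ayₙ − ayₙ₋₁ + c)/(yₙ + yₙ₋₁)`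
satisfies the modified Volterra lattice `∂ₓfₙ = (fₙ² − a²)(fₙ₊₁ − fₙ₋₁)`. -/
theorem volterra_modified_lattice
    (a c : ℂ) (u y : ℝ → ℤ → ℂ)
    (hudiff : ∀ n : ℤ, Differentiable ℝ (fun x => u x n))
    (hydiff : ∀ n : ℤ, Differentiable ℝ (fun x => y x n))
    (hden : ∀ (x : ℝ) (n : ℤ), y x n + y x (n - 1) ≠ 0)
    (hden' : ∀ (x : ℝ) (n : ℤ), y x (n + 1) + y x n ≠ 0)
    (hconstraint : ∀ (x : ℝ) (n : ℤ),
      u x n * (y x (n + 1) + y x n) * (y x n + y x (n - 1))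
        = -4 * a ^ 2 * (y x n) ^ 2 + c ^ 2)
    (hyx : ∀ (x : ℝ) (n : ℤ), HasDerivAt (fun x => y x n)
      (u x n * (y x (n + 1) - y x (n - 1))) x)
    (f : ℝ → ℤ → ℂ)
    (hf : ∀ (x : ℝ) (n : ℤ), f x n =
      (a * y x n - a * y x (n - 1) + c) / (y x n + y x (n - 1))) :
    ∀ (x : ℝ) (n : ℤ), HasDerivAt (fun x => f x n)
      (((f x n) ^ 2 - a ^ 2) * (f x (n + 1) - f x (n - 1))) x :=
  volterra_modified_lattice_general a c u y hden hconstraint hyx f hf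
end

section
/- Let α, ω ∈ ℂ and let u, y : ℤ → ℂ satisfy, for all n: yₙ + yₙ₋₁ ≠ 0, yₙ² − ω² ≠ 0, and uₙ(yₙ₊₁ + yₙ)(yₙ + yₙ₋₁) = α(yₙ² − ω²). Define fₙ = (yₙ − ω)/(yₙ + yₙ₋₁) and ũₙ = uₙ(yₙ₊₁ − ω)(yₙ₋₁ + ω)/(yₙ² − ω²). Then for all n: uₙ = −α(fₙ₊₁ − 1)fₙ and ũₙ = −α·fₙ₊₁(fₙ − 1). -/
/-- the Darboux factorization underlying the Bäcklund
transformation `B`: with `fₙ = (yₙ − ω)/(yₙ + yₙ₋₁)` and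
`ũₙ = uₙ(yₙ₊₁ − ω)(yₙ₋₁ + ω)/(yₙ² − ω²)` one has
`uₙ = −α(fₙ₊₁ − 1)fₙ` and `ũₙ = −αfₙ₊₁(fₙ − 1)`. -/
theorem volterra_darboux_factorization
    (α ω : ℂ) (u y : ℤ → ℂ)
    (hden : ∀ n : ℤ, y n + y (n - 1) ≠ 0)
    (hreg : ∀ n : ℤ, (y n) ^ 2 - ω ^ 2 ≠ 0)
    (hconstraint : ∀ n : ℤ,
      u n * (y (n + 1) + y n) * (y n + y (n - 1)) = α * ((y n) ^ 2 - ω ^ 2))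
    (f ut : ℤ → ℂ)
    (hf : ∀ n : ℤ, f n = (y n - ω) / (y n + y (n - 1)))
    (hut : ∀ n : ℤ, ut n =
      u n * (y (n + 1) - ω) * (y (n - 1) + ω) / ((y n) ^ 2 - ω ^ 2)) :
    ∀ n : ℤ, u n = -α * (f (n + 1) - 1) * f n ∧ ut n = -α * f (n + 1) * (f n - 1) := by
  intro n
  have hd1 := hden n
  have hd2 := hden (n + 1)
  have hr := hreg n
  have hc := hconstraint n
  have hf1 := hf n
  have hf2 := hf (n + 1)
  have hutn := hut n
  simp only [add_sub_cancel_right] at hf2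
  have h2 : y (n + 1) + y n ≠ 0 := by
    have := hd2; rwa [add_sub_cancel_right] at this
  constructor
  · have hu : u n = α * ((y n) ^ 2 - ω ^ 2) / ((y (n + 1) + y n) * (y n + y (n - 1))) := by
      rw [eq_div_iff (mul_ne_zero h2 hd1)]
      linear_combination hc
    rw [hf1, hf2, hu]
    field_simp
    ring
  · have hu : u n = α * ((y n) ^ 2 - ω ^ 2) / ((y (n + 1) + y n) * (y n + y (n - 1))) := by
      rw [eq_div_iff (mul_ne_zero h2 hd1)]
      linear_combination hc
    rw [hutn, hf1, hf2, hu]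
    field_simp
    ring
end
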